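/- arXiv:math/0003152 — 4 statements merged into one kernel-verified Lean document; each statement's English description precedes it below -/
import Mathlib

section
/- Let A be a C*-algebra, ω a positive linear functional on A, and a an element of the closed unit ball of A. Then ‖a·ω − ω‖ ≤ (2‖ω‖)^{1/2} · |‖ω‖ − ω(a)|^{1/2}, where a·ω denotes the functional x ↦ ω(xa). -/
open scoped ComplexOrder

/-!
`ω (x * a) - ω x` is the limit of `ω (x * (a - e))` along an increasing approximate unit `e`, and
Cauchy–Schwarz for the semi-inner product `⟪u, v⟫ = ω (u⋆ v)` bounds `|ω (x * (a - e))|²` by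
`ω (x x⋆) · ω ((a - e)⋆ (a - e))`. As `‖a‖, ‖e‖ ≤ 1`, the second factor is at most
`2‖ω‖ - 2 Re ω(a) ≤ 2 |‖ω‖ - ω(a)|` in the limit, and the first is at most `‖ω‖ ‖x‖²`.
-/

/-- Right translate of a functional: `(a · ω) x = ω (x * a)`. -/
noncomputable def rightMulFunctional {A : Type*} [NonUnitalCStarAlgebra A]
    (ω : A →L[ℂ] ℂ) (a : A) : A →L[ℂ] ℂ :=
  ω.comp ((ContinuousLinearMap.mul ℂ A).flip a)

open Filter Topology

section LinearFunctional

variable {A F : Type*} [NonUnitalCStarAlgebra A] [FunLike F A ℂ] [LinearMapClass F ℂ A ℂ]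
  {f : F} {C : ℝ}

lemma re_apply_star_sub_mul_sub_le (hC : ∀ y : A, ‖y‖ ≤ 1 → (f (star y * y)).re ≤ C)
    {a e : A} (ha : ‖a‖ ≤ 1) (he : ‖e‖ ≤ 1) (he' : IsSelfAdjoint e) :
    (f (star (a - e) * (a - e))).re ≤ 2 * C - (f (star a * e)).re - (f (e * a)).re := by
  have hexp : star (a - e) * (a - e) = star a * a - star a * e - e * a + star e * e := by
    rw [star_sub, he'.star_eq]; noncomm_ring
  rw [hexp]
  simp only [map_add, map_sub, Complex.add_re, Complex.sub_re]
  linarith [hC a ha, hC e he]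

end LinearFunctional

namespace PositiveLinearMap

variable {A : Type*} [NonUnitalCStarAlgebra A] [PartialOrder A] [StarOrderedRing A]
  (f : A →ₚ[ℂ] ℂ)

lemma re_apply_mul_star_self_nonneg (x : A) : 0 ≤ (f (x * star x)).re :=
  (Complex.nonneg_iff.mp (f.map_nonneg (mul_star_self_nonneg x))).1

lemma norm_apply_mul_sq_le (x y : A) :
    ‖f (x * y)‖ ^ 2 ≤ (f (x * star x)).re * (f (star y * y)).re := by
  have h := norm_inner_le_norm (𝕜 := ℂ) (f.toPreGNS (star x)) (f.toPreGNS y)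
  rw [preGNS_inner_def] at h
  have hx := congrArg Complex.re (f.preGNS_norm_sq (f.toPreGNS (star x)))
  have hy := congrArg Complex.re (f.preGNS_norm_sq (f.toPreGNS y))
  simp only [ofPreGNS_toPreGNS, star_star] at h hx hy
  norm_cast at hx hy
  rw [← hx, ← hy, ← mul_pow]
  gcongr

lemma norm_apply_mul_sub_sq_le {C : ℝ} (hC : ∀ y : A, ‖y‖ ≤ 1 → (f (star y * y)).re ≤ C)
    (x : A) {a : A} (ha : ‖a‖ ≤ 1) :
    ‖f (x * a) - f x‖ ^ 2 ≤ (f (x * star x)).re * (2 * (C - (f a).re)) := by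
  have hl := CStarAlgebra.increasingApproximateUnit A
  have := hl.neBot
  have hf : ∀ z, Tendsto f (𝓝 z) (𝓝 (f z)) := (map_continuous f).tendsto
  have hlim_left : Tendsto (fun e ↦ ‖f (x * (a - e))‖ ^ 2) (CStarAlgebra.approximateUnit A)
      (𝓝 (‖f (x * a) - f x‖ ^ 2)) := by
    simp only [mul_sub, map_sub]
    exact ((tendsto_const_nhds.sub ((hf x).comp (hl.tendsto_mul_left x))).norm).pow 2
  have hlim_right : Tendsto
      (fun e ↦ (f (x * star x)).re * (2 * C - (f (star a * e)).re - (f (e * a)).re))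
      (CStarAlgebra.approximateUnit A) (𝓝 ((f (x * star x)).re * (2 * (C - (f a).re)))) := by
    have hstar : (f (star a)).re = (f a).re := by rw [map_star, Complex.star_def, Complex.conj_re]
    have hleft := Complex.continuous_re.tendsto _ |>.comp <| (hf _).comp (hl.tendsto_mul_left (star a))
    have hright := Complex.continuous_re.tendsto _ |>.comp <| (hf _).comp (hl.tendsto_mul_right a)
    rw [show 2 * (C - (f a).re) = 2 * C - (f (star a)).re - (f a).re by rw [hstar]; ring]
    exact tendsto_const_nhds.mul ((tendsto_const_nhds.sub hleft).sub hright)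
  refine le_of_tendsto_of_tendsto hlim_left hlim_right ?_
  filter_upwards [hl.eventually_norm, hl.eventually_isSelfAdjoint] with e he he'
  calc ‖f (x * (a - e))‖ ^ 2 ≤ (f (x * star x)).re * (f (star (a - e) * (a - e))).re :=
        norm_apply_mul_sq_le f x (a - e)
    _ ≤ _ := by
      gcongr
      · exact f.re_apply_mul_star_self_nonneg x
      · exact re_apply_star_sub_mul_sub_le hC ha he he'

end PositiveLinearMap

namespace ContinuousLinearMap

variable {A : Type*} [NonUnitalCStarAlgebra A] (ω : A →L[ℂ] ℂ)

lemma re_apply_mul_star_self_le (x : A) : (ω (x * star x)).re ≤ ‖ω‖ * ‖x‖ ^ 2 :=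
  calc (ω (x * star x)).re ≤ ‖ω (x * star x)‖ := Complex.re_le_norm _
    _ ≤ ‖ω‖ * ‖x * star x‖ := ω.le_opNorm _
    _ = ‖ω‖ * ‖x‖ ^ 2 := by rw [CStarRing.norm_self_mul_star, sq]

lemma re_apply_star_mul_self_le {y : A} (hy : ‖y‖ ≤ 1) : (ω (star y * y)).re ≤ ‖ω‖ := by
  have h := ω.re_apply_mul_star_self_le (star y)
  rw [star_star, norm_star] at h
  exact h.trans (mul_le_of_le_one_right (norm_nonneg ω) (pow_le_one₀ (norm_nonneg y) hy))

end ContinuousLinearMap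

theorem norm_rightMulFunctional_sub_le
    {A : Type*} [NonUnitalCStarAlgebra A]
    (ω : A →L[ℂ] ℂ) (hω : ∀ x : A, 0 ≤ ω (star x * x))
    (a : A) (ha : ‖a‖ ≤ 1) :
    ‖rightMulFunctional ω a - ω‖ ≤
      Real.sqrt (2 * ‖ω‖) * Real.sqrt ‖(‖ω‖ : ℂ) - ω a‖ := by
  let _ := CStarAlgebra.spectralOrder A
  let _ := CStarAlgebra.spectralOrderedRing A
  let f : A →ₚ[ℂ] ℂ := .mk₀ ω.toLinearMap fun z hz ↦ by
    obtain ⟨y, rfl⟩ := CStarAlgebra.nonneg_iff_eq_star_mul_self.mp hz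
    exact hω y
  refine ContinuousLinearMap.opNorm_le_bound _ (by positivity) fun x ↦ ?_
  rw [← Real.sqrt_mul (by positivity), ← Real.sqrt_sq (norm_nonneg x),
    ← Real.sqrt_mul (by positivity)]
  refine Real.le_sqrt_of_sq_le ?_
  calc ‖(rightMulFunctional ω a - ω) x‖ ^ 2 = ‖f (x * a) - f x‖ ^ 2 := rfl
    _ ≤ (ω (x * star x)).re * (2 * (‖ω‖ - (ω a).re)) :=
      f.norm_apply_mul_sub_sq_le (fun y hy ↦ ω.re_apply_star_mul_self_le hy) x ha
    _ ≤ (ω (x * star x)).re * (2 * ‖(‖ω‖ : ℂ) - ω a‖) := by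
      gcongr
      · exact f.re_apply_mul_star_self_nonneg x
      · simpa using Complex.re_le_norm ((‖ω‖ : ℂ) - ω a)
    _ ≤ ‖ω‖ * ‖x‖ ^ 2 * (2 * ‖(‖ω‖ : ℂ) - ω a‖) := by
      gcongr
      exact ω.re_apply_mul_star_self_le x
    _ = 2 * ‖ω‖ * ‖(‖ω‖ : ℂ) - ω a‖ * ‖x‖ ^ 2 := by ring
end

section
/- Let φ, ψ be elements of the predual of a von Neumann algebra N. If φ and ψ are orthogonal (i.e., they have orthogonal right support projections and orthogonal left support projections), then ‖αφ + βψ‖ = |α|‖φ‖ + |β|‖ψ‖ for all scalars α, β; that is, the linear span of φ and ψ is isometric to two-dimensional ℓ¹. -/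
/-!
Given `x, y` in the unit ball, the compressions `s x t` and `s' y t'` have orthogonal left and
right supports, so their sum still lies in the unit ball (for `a⋆b = ab⋆ = 0` the positive
elements `a⋆a`, `b⋆b` multiply to zero, and the C⋆-identity on the powers `(a⋆a + b⋆b) ^ 2 ^ n`
bounds `‖a + b‖` by `max ‖a‖ ‖b‖`). On this sum `φ + ψ` takes the value `φ x + ψ y`, so
`‖φ x + ψ y‖ ≤ ‖φ + ψ‖`; rotating `x` and `y` by phases gives `‖φ‖ + ‖ψ‖ ≤ ‖φ + ψ‖`.
Orthogonality is preserved by scalar multiples, which gives the `ℓ¹` identity.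
-/

/-- Two functionals `φ, ψ` on a von Neumann algebra `N` (modelled as a unital
C*-algebra) are orthogonal: there are projections `s, t` supporting `φ`
(that is, `φ = t·φ·s`, i.e. `φ x = φ (s * x * t)`) and projections `s', t'`
supporting `ψ`, with `s ⊥ s'` and `t ⊥ t'`. -/
def OrthogonalFunctionals {N : Type*} [CStarAlgebra N] (φ ψ : N →L[ℂ] ℂ) : Prop :=
  ∃ s t s' t' : N,
    (IsSelfAdjoint s ∧ s * s = s) ∧ (IsSelfAdjoint t ∧ t * t = t) ∧
    (IsSelfAdjoint s' ∧ s' * s' = s') ∧ (IsSelfAdjoint t' ∧ t' * t' = t') ∧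
    s * s' = 0 ∧ t * t' = 0 ∧
    (∀ x, φ x = φ (s * x * t)) ∧ (∀ x, ψ x = ψ (s' * x * t'))

lemma le_of_forall_pow_two_pow_le_mul {r m C : ℝ} (hm : 0 ≤ m)
    (h : ∀ n : ℕ, r ^ 2 ^ n ≤ C * m ^ 2 ^ n) : r ≤ m := by
  by_contra! hmr
  rcases hm.eq_or_lt with rfl | hm
  · simpa using (h 0).not_gt (by simpa using hmr)
  · have hratio : 1 < r / m := (one_lt_div hm).mpr hmr
    obtain ⟨n, hn⟩ := pow_unbounded_of_one_lt C hratio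
    have hC : C < (r / m) ^ 2 ^ n :=
      hn.trans_le (pow_le_pow_right₀ hratio.le Nat.lt_two_pow_self.le)
    rw [div_pow, lt_div_iff₀ (by positivity)] at hC
    exact (h n).not_gt hC

lemma add_pow_of_mul_eq_zero {R : Type*} [Semiring R] {p q : R} (hpq : p * q = 0)
    (hqp : q * p = 0) {n : ℕ} (hn : n ≠ 0) : (p + q) ^ n = p ^ n + q ^ n := by
  obtain ⟨k, rfl⟩ := Nat.exists_eq_add_one_of_ne_zero hn
  clear hn
  induction k with
  | zero => simp
  | succ k ih =>
    have hpq' : p ^ (k + 1) * q = 0 := by rw [pow_succ, mul_assoc, hpq, mul_zero]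
    have hqp' : q ^ (k + 1) * p = 0 := by rw [pow_succ, mul_assoc, hqp, mul_zero]
    rw [pow_succ, ih, add_mul, mul_add, mul_add, hpq', hqp', add_zero, zero_add,
      ← pow_succ, ← pow_succ]

section CStarRing

variable {A : Type*} [NormedRing A] [StarRing A] [CStarRing A]

lemma IsSelfAdjoint.norm_add_le_max_of_mul_eq_zero {p q : A} (hp : IsSelfAdjoint p)
    (hq : IsSelfAdjoint q) (hpq : p * q = 0) : ‖p + q‖ ≤ max ‖p‖ ‖q‖ := by
  have hqp : q * p = 0 := (hp.commute_of_mul_eq_zero hq hpq).eq.symm.trans hpq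
  refine le_of_forall_pow_two_pow_le_mul (C := 2)
    ((norm_nonneg _).trans (le_max_left _ _)) fun n => ?_
  have hn : 2 ^ n ≠ 0 := pow_ne_zero n two_ne_zero
  calc ‖p + q‖ ^ 2 ^ n = ‖p ^ 2 ^ n + q ^ 2 ^ n‖ := by
        rw [← (hp.add hq).norm_pow_two_pow, add_pow_of_mul_eq_zero hpq hqp hn]
    _ ≤ ‖p‖ ^ 2 ^ n + ‖q‖ ^ 2 ^ n :=
        norm_add_le_of_le (norm_pow_le' p (Nat.pos_of_ne_zero hn))
          (norm_pow_le' q (Nat.pos_of_ne_zero hn))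
    _ ≤ max ‖p‖ ‖q‖ ^ 2 ^ n + max ‖p‖ ‖q‖ ^ 2 ^ n := by
        gcongr
        exacts [le_max_left _ _, le_max_right _ _]
    _ = 2 * max ‖p‖ ‖q‖ ^ 2 ^ n := by ring

lemma norm_add_le_max_of_star_mul_eq_zero {a b : A} (hab : star a * b = 0)
    (hab' : a * star b = 0) : ‖a + b‖ ≤ max ‖a‖ ‖b‖ := by
  have hba : star b * a = 0 := by simpa using congrArg star hab
  have hmul : (star a * a) * (star b * b) = 0 := by
    rw [mul_assoc, ← mul_assoc a, hab', zero_mul, mul_zero]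
  rw [mul_self_le_mul_self_iff (norm_nonneg _) ((norm_nonneg _).trans (le_max_left _ _))]
  calc ‖a + b‖ * ‖a + b‖ = ‖star a * a + star b * b‖ := by
        rw [← CStarRing.norm_star_mul_self, star_add, add_mul, mul_add, mul_add, hab, hba,
          add_zero, zero_add]
    _ ≤ max ‖star a * a‖ ‖star b * b‖ :=
        (IsSelfAdjoint.star_mul_self a).norm_add_le_max_of_mul_eq_zero
          (IsSelfAdjoint.star_mul_self b) hmul
    _ ≤ max ‖a‖ ‖b‖ * max ‖a‖ ‖b‖ := by
        rw [CStarRing.norm_star_mul_self, CStarRing.norm_star_mul_self]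
        exact max_le (mul_self_le_mul_self (norm_nonneg _) (le_max_left _ _))
          (mul_self_le_mul_self (norm_nonneg _) (le_max_right _ _))

lemma norm_mul_mul_add_mul_mul_le_max {s t s' t' : A} (hs : IsStarProjection s)
    (ht : IsStarProjection t) (hs' : IsStarProjection s') (ht' : IsStarProjection t')
    (hss' : s * s' = 0) (htt' : t * t' = 0) (x y : A) :
    ‖s * x * t + s' * y * t'‖ ≤ max ‖x‖ ‖y‖ := by
  have hcorner {p q : A} (hp : IsStarProjection p) (hq : IsStarProjection q) (z : A) :
      ‖p * z * q‖ ≤ ‖z‖ :=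
    calc ‖p * z * q‖ ≤ ‖p‖ * ‖z‖ * ‖q‖ := norm_mul₃_le
      _ ≤ 1 * ‖z‖ * 1 := by gcongr; exacts [hp.norm_le, hq.norm_le]
      _ = ‖z‖ := by ring
  refine (norm_add_le_max_of_star_mul_eq_zero ?_ ?_).trans
    (max_le_max (hcorner hs ht x) (hcorner hs' ht' y))
  · simp only [star_mul, hs.isSelfAdjoint.star_eq, mul_assoc]
    rw [← mul_assoc s, hss', zero_mul, mul_zero, mul_zero]
  · simp only [star_mul, ht'.isSelfAdjoint.star_eq, mul_assoc]
    rw [← mul_assoc t, htt', zero_mul, mul_zero, mul_zero]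

end CStarRing

lemma RCLike.exists_norm_le_one_mul_eq_norm {𝕜 : Type*} [RCLike 𝕜] (z : 𝕜) :
    ∃ u : 𝕜, ‖u‖ ≤ 1 ∧ u * z = ‖z‖ := by
  refine ⟨starRingEnd 𝕜 z / ‖z‖, ?_, ?_⟩
  · rw [norm_div, RCLike.norm_conj, RCLike.norm_ofReal, abs_norm]
    exact div_self_le_one _
  · rw [div_mul_eq_mul_div, RCLike.conj_mul]
    rcases eq_or_ne z 0 with rfl | hz
    · simp
    · field_simp

namespace ContinuousLinearMap

variable {𝕜 E : Type*} [RCLike 𝕜] [SeminormedAddCommGroup E] [NormedSpace 𝕜 E]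

lemma norm_add_norm_le_of_norm_apply_add_apply_le (f g : E →L[𝕜] 𝕜) {R : ℝ}
    (h : ∀ x y : E, ‖x‖ ≤ 1 → ‖y‖ ≤ 1 → ‖f x + g y‖ ≤ R) : ‖f‖ + ‖g‖ ≤ R := by
  have hsum : ∀ x y : E, ‖x‖ ≤ 1 → ‖y‖ ≤ 1 → ‖f x‖ + ‖g y‖ ≤ R := by
    intro x y hx hy
    obtain ⟨u, hu, hux⟩ := RCLike.exists_norm_le_one_mul_eq_norm (f x)
    obtain ⟨v, hv, hvy⟩ := RCLike.exists_norm_le_one_mul_eq_norm (g y)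
    have hunit : ‖u • x‖ ≤ 1 ∧ ‖v • y‖ ≤ 1 := by
      rw [norm_smul, norm_smul]
      exact ⟨mul_le_one₀ hu (norm_nonneg _) hx, mul_le_one₀ hv (norm_nonneg _) hy⟩
    calc ‖f x‖ + ‖g y‖ = ‖f (u • x) + g (v • y)‖ := by
          rw [map_smul, map_smul, smul_eq_mul, smul_eq_mul, hux, hvy, ← RCLike.ofReal_add,
            RCLike.norm_ofReal, abs_of_nonneg (by positivity)]
      _ ≤ R := h _ _ hunit.1 hunit.2
  have hf : ∀ y : E, ‖y‖ ≤ 1 → ‖f‖ ≤ R - ‖g y‖ := fun y hy =>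
    opNorm_le_of_unit_norm (by simpa using hsum 0 y (by simp) hy)
      fun x hx => le_sub_iff_add_le.mpr (hsum x y hx.le hy)
  have hg : ‖g‖ ≤ R - ‖f‖ :=
    opNorm_le_of_unit_norm (by simpa using hf 0 (by simp))
      fun y hy => le_sub_iff_add_le'.mpr (le_sub_iff_add_le.mp (hf y hy.le))
  linarith

end ContinuousLinearMap

namespace OrthogonalFunctionals

variable {N : Type*} [CStarAlgebra N] {φ ψ : N →L[ℂ] ℂ}

lemma smul (h : OrthogonalFunctionals φ ψ) (α β : ℂ) :
    OrthogonalFunctionals (α • φ) (β • ψ) := by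
  obtain ⟨s, t, s', t', hs, ht, hs', ht', hss', htt', hφ, hψ⟩ := h
  exact ⟨s, t, s', t', hs, ht, hs', ht', hss', htt',
    fun x => congrArg (α • ·) (hφ x), fun x => congrArg (β • ·) (hψ x)⟩

lemma norm_apply_add_apply_le (h : OrthogonalFunctionals φ ψ) {x y : N} (hx : ‖x‖ ≤ 1)
    (hy : ‖y‖ ≤ 1) : ‖φ x + ψ y‖ ≤ ‖φ + ψ‖ := by
  obtain ⟨s, t, s', t', ⟨hs, hs2⟩, ⟨ht, ht2⟩, ⟨hs', hs'2⟩, ⟨ht', ht'2⟩, hss', htt', hφ, hψ⟩ := h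
  have hs's : s' * s = 0 := (hs.commute_of_mul_eq_zero hs' hss').eq.symm.trans hss'
  have ht't : t' * t = 0 := (ht.commute_of_mul_eq_zero ht' htt').eq.symm.trans htt'
  have hφ' : φ (s' * y * t') = 0 := by
    rw [hφ, show s * (s' * y * t') * t = s * s' * y * (t' * t) by simp only [mul_assoc],
      hss', ht't, zero_mul, zero_mul, map_zero]
  have hψ' : ψ (s * x * t) = 0 := by
    rw [hψ, show s' * (s * x * t) * t' = s' * s * x * (t * t') by simp only [mul_assoc],
      hs's, htt', zero_mul, zero_mul, map_zero]
  have hz : ‖s * x * t + s' * y * t'‖ ≤ 1 :=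
    (norm_mul_mul_add_mul_mul_le_max ⟨hs2, hs⟩ ⟨ht2, ht⟩ ⟨hs'2, hs'⟩ ⟨ht'2, ht'⟩ hss' htt'
      x y).trans (max_le hx hy)
  calc ‖φ x + ψ y‖ = ‖(φ + ψ) (s * x * t + s' * y * t')‖ := by
        rw [add_apply, map_add, map_add, hφ', hψ', ← hφ, ← hψ, add_zero, zero_add]
    _ ≤ ‖φ + ψ‖ := (φ + ψ).unit_le_opNorm _ hz

lemma norm_add (h : OrthogonalFunctionals φ ψ) : ‖φ + ψ‖ = ‖φ‖ + ‖ψ‖ :=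
  (norm_add_le φ ψ).antisymm <| ContinuousLinearMap.norm_add_norm_le_of_norm_apply_add_apply_le
    φ ψ fun _ _ hx hy => h.norm_apply_add_apply_le hx hy

end OrthogonalFunctionals

/-- If `φ ⊥ ψ` in the predual of a von Neumann algebra then the span of `φ, ψ`
is isometric to two-dimensional `ℓ¹`: `‖α φ + β ψ‖ = |α| ‖φ‖ + |β| ‖ψ‖`. -/
theorem orthogonal_functionals_span_l1
    {N : Type*} [CStarAlgebra N] (φ ψ : N →L[ℂ] ℂ)
    (h : OrthogonalFunctionals φ ψ) (α β : ℂ) :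
    ‖α • φ + β • ψ‖ = ‖α‖ * ‖φ‖ + ‖β‖ * ‖ψ‖ := by
  rw [(h.smul α β).norm_add, norm_smul, norm_smul]
end

section
/- Let A be a unital C*-algebra and let φ_1,…,φ_{n+1} be positive functionals in the unit ball of A' with ‖Σ_{k=1}^{n+1} α_k φ_k‖ ≥ (1−δ)Σ_{k=1}^{n+1}|α_k| for all scalars. Set σ = (1/n)Σ_{k=1}^n φ_k and τ = φ_{n+1}. Then there exists a selfadjoint x in the unit ball of A with positive part x⁺ and negative part x⁻ such that φ_k(x⁺) > 1 − 4nδ for k = 1,…,n and φ_{n+1}(x⁻) > 1 − 4δ. -/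
/-!
Let `σ` be the average of `φ 0, …, φ (n-1)` and `τ = φ n`. The `ℓ¹` hypothesis gives
`‖σ - τ‖ ≥ 2(1 - δ)`, and `σ - τ` is hermitian, so it almost attains its norm at a selfadjoint
`x` in the unit ball: `Re (σ - τ) x > 2(1 - 2δ)`. Positivity gives
`Re (σ - τ) x ≤ σ x⁺ + τ x⁻`, and both terms are at most `1`, so each exceeds `1 - 4δ`.
Averaging turns `σ x⁺ > 1 - 4δ` into `φ k x⁺ > 1 - 4nδ`.
-/

open scoped ComplexOrder
open ComplexStarModule

theorem Finset.one_sub_lt_of_card_sub_lt_sum {ι : Type*} [DecidableEq ι] {s : Finset ι}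
    {f : ι → ℝ} {ε : ℝ} (hf : ∀ j ∈ s, f j ≤ 1) (hsum : s.card - ε < ∑ j ∈ s, f j) {k : ι}
    (hk : k ∈ s) : 1 - ε < f k := by
  have hrest : ∑ j ∈ s.erase k, f j ≤ s.card - 1 :=
    calc ∑ j ∈ s.erase k, f j ≤ (s.erase k).card • (1 : ℝ) :=
          sum_le_card_nsmul _ _ _ fun j hj => hf j (mem_of_mem_erase hj)
      _ = s.card - 1 := by
        rw [card_erase_of_mem hk, nsmul_one, Nat.cast_pred (card_pos.mpr ⟨k, hk⟩)]
  linarith [add_sum_erase s f hk]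

section Normed

variable {E : Type*} [NormedAddCommGroup E] [NormedSpace ℂ E]

lemma re_apply_le_one {ψ : E →L[ℂ] ℂ} (hψ : ‖ψ‖ ≤ 1) {b : E} (hb : ‖b‖ ≤ 1) : (ψ b).re ≤ 1 :=
  (Complex.re_le_norm _).trans <| (ψ.le_of_opNorm_le hψ b).trans (by simpa using hb)

variable [StarAddMonoid E] [StarModule ℂ E] [NormedStarGroup E]

lemma exists_isSelfAdjoint_lt_re_apply (ψ : E →L[ℂ] ℂ)
    (hψ : ∀ y, IsSelfAdjoint y → (ψ y).im = 0) {r : ℝ} (hr : r < ‖ψ‖) :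
    ∃ x : E, IsSelfAdjoint x ∧ ‖x‖ ≤ 1 ∧ r < (ψ x).re := by
  obtain ⟨a, ha, hra⟩ := ψ.exists_lt_apply_of_lt_opNorm hr
  obtain ⟨u, hu, hua⟩ := Complex.exists_norm_eq_mul_self (ψ a)
  set b := u • a
  refine ⟨ℜ b, (ℜ b).prop, (realPart.norm_le b).trans ?_, ?_⟩
  · rw [norm_smul, hu, one_mul]
    exact ha.le
  · have hb : ψ b = ψ (ℜ b) + Complex.I * ψ (ℑ b) := by
      conv_lhs => rw [← realPart_add_I_smul_imaginaryPart b]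
      simp
    have hre : (ψ (ℜ b)).re = (ψ b).re := by
      simp [hb, hψ _ (ℑ b).prop]
    rwa [hre, map_smul, smul_eq_mul, ← hua, Complex.ofReal_re]

end Normed

section PositiveFunctional

variable {A : Type*} [NonUnitalCStarAlgebra A] [PartialOrder A] [StarOrderedRing A]

lemma map_nonneg_of_forall_star_mul_self {φ : A →L[ℂ] ℂ} (hφ : ∀ a, 0 ≤ φ (star a * a))
    {a : A} (ha : 0 ≤ a) : 0 ≤ φ a := by
  obtain ⟨b, rfl⟩ := CStarAlgebra.nonneg_iff_eq_star_mul_self.mp ha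
  exact hφ b

lemma im_apply_eq_zero_of_isSelfAdjoint {φ : A →L[ℂ] ℂ} (hφ : ∀ a, 0 ≤ a → 0 ≤ φ a) {y : A}
    (hy : IsSelfAdjoint y) : (φ y).im = 0 := by
  have hp := Complex.nonneg_iff.mp (hφ _ (CFC.posPart_nonneg y))
  have hm := Complex.nonneg_iff.mp (hφ _ (CFC.negPart_nonneg y))
  rw [← CFC.posPart_sub_negPart y hy, map_sub, Complex.sub_im, ← hp.2, ← hm.2, sub_zero]

lemma exists_isSelfAdjoint_lt_re_apply_posPart_add_re_apply_negPart {σ τ : A →L[ℂ] ℂ}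
    (hσ : ∀ a, 0 ≤ a → 0 ≤ σ a) (hτ : ∀ a, 0 ≤ a → 0 ≤ τ a) {r : ℝ} (hr : r < ‖σ - τ‖) :
    ∃ x : A, IsSelfAdjoint x ∧ ‖x‖ ≤ 1 ∧ r < (σ x⁺).re + (τ x⁻).re := by
  obtain ⟨x, hx, hx1, hrx⟩ := exists_isSelfAdjoint_lt_re_apply (σ - τ) (fun y hy => by
    simp [im_apply_eq_zero_of_isSelfAdjoint hσ hy, im_apply_eq_zero_of_isSelfAdjoint hτ hy]) hr
  refine ⟨x, hx, hx1, ?_⟩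
  have hσx := (Complex.nonneg_iff.mp (hσ _ (CFC.negPart_nonneg x))).1
  have hτx := (Complex.nonneg_iff.mp (hτ _ (CFC.posPart_nonneg x))).1
  rw [← CFC.posPart_sub_negPart x hx] at hrx
  simp only [sub_apply, map_sub, Complex.sub_re] at hrx
  linarith

lemma exists_isSelfAdjoint_lt_average_posPart_add_negPart {n : ℕ}
    {φ : Fin (n + 1) → A →L[ℂ] ℂ} (hφ : ∀ k, ∀ a, 0 ≤ a → 0 ≤ φ k a) {r : ℝ}
    (hr : r < ‖(n : ℂ)⁻¹ • ∑ j : Fin n, φ j.castSucc - φ (Fin.last n)‖) :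
    ∃ x : A, IsSelfAdjoint x ∧ ‖x‖ ≤ 1 ∧
      r < (n : ℝ)⁻¹ * ∑ j : Fin n, (φ j.castSucc x⁺).re + (φ (Fin.last n) x⁻).re := by
  have hσ : ∀ a, 0 ≤ a → 0 ≤ ((n : ℂ)⁻¹ • ∑ j : Fin n, φ j.castSucc) a := fun a ha => by
    rw [smul_apply, sum_apply, smul_eq_mul, ← Complex.ofReal_natCast, ← Complex.ofReal_inv]
    exact mul_nonneg (Complex.zero_le_real.mpr (by positivity))
      (Finset.sum_nonneg fun j _ => hφ _ a ha)
  simpa [Complex.re_sum] using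
    exists_isSelfAdjoint_lt_re_apply_posPart_add_re_apply_negPart hσ (hφ (Fin.last n)) hr

end PositiveFunctional

/-- Let `A` be a unital C*-algebra and `φ 0, …, φ n` positive functionals in the
unit ball of `A'` which are `(1-δ)`-equivalent to the `ℓ¹_{n+1}` basis.  Then
there is a selfadjoint `x` in the unit ball of `A` with positive part `x⁺` and
negative part `x⁻` such that `φ k (x⁺) > 1 - 4nδ` for `k < n` and
`φ n (x⁻) > 1 - 4δ`. -/
theorem exists_separating_selfadjoint
    {A : Type*} [CStarAlgebra A] [PartialOrder A] [StarOrderedRing A] (n : ℕ) (δ : ℝ) (hδ : 0 < δ)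
    (φ : Fin (n + 1) → (A →L[ℂ] ℂ))
    (hpos : ∀ k, ∀ a : A, 0 ≤ φ k (star a * a))
    (hnorm : ∀ k, ‖φ k‖ ≤ 1)
    (hl1 : ∀ α : Fin (n + 1) → ℂ,
      (1 - δ) * ∑ k, ‖α k‖ ≤ ‖∑ k, α k • φ k‖) :
    ∃ x xp xm : A, IsSelfAdjoint x ∧ ‖x‖ ≤ 1 ∧
      0 ≤ xp ∧ 0 ≤ xm ∧ x = xp - xm ∧ xp * xm = 0 ∧
      (∀ k : Fin n, 1 - 4 * n * δ < (φ k.castSucc xp).re) ∧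
      1 - 4 * δ < (φ (Fin.last n) xm).re := by
  -- `c = n⁻¹ * n` is `1`, except when `n = 0`: then the average is `0` and `c = 0`.
  set c : ℝ := (n : ℝ)⁻¹ * n
  have hc : c ≤ 1 := inv_mul_le_one
  have hnorm_sub :
      (1 - δ) * (c + 1) ≤ ‖(n : ℂ)⁻¹ • ∑ j : Fin n, φ j.castSucc - φ (Fin.last n)‖ := by
    simpa [c, mul_comm, Fin.sum_univ_castSucc, Finset.smul_sum, sub_eq_add_neg,
      neg_one_smul ℂ (φ (Fin.last n))] using
      hl1 (Fin.snoc (α := fun _ => ℂ) (fun _ => (n : ℂ)⁻¹) (-1))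
  obtain ⟨x, hx, hx1, hlt⟩ := exists_isSelfAdjoint_lt_average_posPart_add_negPart
    (fun k _ => map_nonneg_of_forall_star_mul_self (hpos k)) (r := (1 - 2 * δ) * (c + 1))
    (hnorm_sub.trans_lt' (by nlinarith [show 0 ≤ c by positivity]))
  have hp : ∀ k, (φ k x⁺).re ≤ 1 :=
    fun k => re_apply_le_one (hnorm k) ((CStarAlgebra.norm_posPart_le x).trans hx1)
  have hq : (φ (Fin.last n) x⁻).re ≤ 1 :=
    re_apply_le_one (hnorm _) ((CStarAlgebra.norm_negPart_le x).trans hx1)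
  have havg : (n : ℝ)⁻¹ * ∑ j : Fin n, (φ j.castSucc x⁺).re ≤ c := by
    show _ ≤ (n : ℝ)⁻¹ * n
    gcongr
    simpa using Finset.sum_le_card_nsmul Finset.univ _ 1 fun (j : Fin n) _ => hp j.castSucc
  refine ⟨x, x⁺, x⁻, hx, hx1, CFC.posPart_nonneg x, CFC.negPart_nonneg x,
    (CFC.posPart_sub_negPart x hx).symm, CFC.posPart_mul_negPart x, fun k => ?_, by nlinarith⟩
  have hn : (0 : ℝ) < n := by exact_mod_cast k.pos
  have hc1 : c = 1 := inv_mul_cancel₀ hn.ne'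
  have hσx : 1 - 4 * δ < (n : ℝ)⁻¹ * ∑ j : Fin n, (φ j.castSucc x⁺).re := by
    rw [hc1] at hlt
    linarith
  refine Finset.one_sub_lt_of_card_sub_lt_sum (fun j _ => hp _) ?_ (Finset.mem_univ k)
  rw [Finset.card_univ, Fintype.card_fin]
  linarith [(lt_inv_mul_iff₀ hn).mp hσx]
end

section
/- Let (A_i)_{i∈ℕ} be a family of C*-algebras, U a free ultrafilter on ℕ, and A = (A_i)/U their Banach-space ultraproduct, which is canonically a C*-algebra. If ψ = [ψ_i]_U ∈ A' is a functional represented by a bounded family (ψ_i) with ψ_i ∈ A_i', then |ψ| = [|ψ_i|]_U and |ψ*| = [|ψ_i*|]_U, i.e., the absolute value from polar decomposition commutes with the ultraproduct construction. -/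
open scoped ComplexOrder
open Filter Topology

universe u

/-- A witness that `absψ` is the absolute value `|ψ|` of the functional `ψ` on a
C*-algebra `A`: in some ambient unital C*-algebra `B` (playing the role of the
enveloping von Neumann algebra `A''`) into which `A` embeds isometrically and to
which `ψ` extends with the same norm, there is a partial isometry `u` realizing
the polar decomposition `ψ = u |ψ|`, `|ψ| = u* ψ`. -/
structure PolarWitness (A : Type u) [NonUnitalCStarAlgebra A]
    (ψ absψ : A →L[ℂ] ℂ) : Type (u + 1) where
  B : Type
  [instRing : NormedRing B]
  [instStarRing : StarRing B]
  [instCStar : CStarRing B]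
  [instAlg : NormedAlgebra ℂ B]
  [instStarMod : StarModule ℂ B]
  [instComplete : CompleteSpace B]
  ι : A → B
  ι_add : ∀ x y, ι (x + y) = ι x + ι y
  ι_smul : ∀ (c : ℂ) (x : A), ι (c • x) = c • ι x
  ι_mul : ∀ x y, ι (x * y) = ι x * ι y
  ι_star : ∀ x, ι (star x) = star (ι x)
  ι_isometry : ∀ x, ‖ι x‖ = ‖x‖
  Φ : B →L[ℂ] ℂ
  absΦ : B →L[ℂ] ℂ
  u : B
  hΦ : ∀ x, Φ (ι x) = ψ x
  hΦnorm : ‖Φ‖ = ‖ψ‖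
  hu : u * star u * u = u
  hu1 : ‖u‖ ≤ 1
  habsΦpos : ∀ b, 0 ≤ absΦ (star b * b)
  habsΦnorm : ‖absΦ‖ = ‖ψ‖
  hpolar : ∀ b, Φ b = absΦ (b * u)
  habs : ∀ b, absΦ b = Φ (b * star u)
  habsψ : ∀ x, absΦ (ι x) = absψ x

/-- `absψ` is the absolute value `|ψ|` from the polar decomposition of `ψ`. -/
def IsAbsValue {A : Type u} [NonUnitalCStarAlgebra A] (ψ absψ : A →L[ℂ] ℂ) : Prop :=
  Nonempty (PolarWitness A ψ absψ)

/-- A family `x i ∈ A i` is (norm-)bounded. -/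
def BddFamily {A : ℕ → Type u} [∀ i, NonUnitalCStarAlgebra (A i)]
    (x : ∀ i, A i) : Prop := ∃ C : ℝ, ∀ i, ‖x i‖ ≤ C

/-! With `w = ι(a) u` the polar decomposition gives `|ψ|(x) - ψ(x a) = |ψ|(x (1 - w))` and
`|ψ|(w) = ψ(a)`, so the Cauchy–Schwarz inequality for the positive functional `|ψ|` yields
`‖|ψ|(x) - ψ(x a)‖² ≤ 2 ‖ψ‖ (‖ψ‖ - Re ψ(a)) ‖x‖²` whenever `‖a‖ ≤ 1`.
Pick `a_i` in the unit balls with `Re ψ_i(a_i) > ‖ψ_i‖ - ε`. Since `‖ψ‖ ≤ lim_U r_i` whenever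
`‖ψ_i‖ ≤ r_i`, the element `[a_i]_U` almost norms `ψ` too, so `|ψ_i|(x_i)` and `|ψ|([x_i]_U)`
are uniformly `O(√ε)`-close to `ψ_i(x_i a_i)` and `ψ([x_i a_i]_U)`, and these are related by
`ψ = [ψ_i]_U`. The family `ψ_i*` is bounded and represents `ψ*`, which gives the second
statement. -/

open scoped InnerProductSpace

namespace ContinuousLinearMap

variable {E : Type*} [NormedAddCommGroup E] [NormedSpace ℂ E]

lemma re_apply_le_opNorm (f : E →L[ℂ] ℂ) {a : E} (ha : ‖a‖ ≤ 1) : (f a).re ≤ ‖f‖ :=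
  calc (f a).re ≤ ‖f a‖ := Complex.re_le_norm _
    _ ≤ ‖f‖ := f.le_of_opNorm_le_of_le le_rfl ha |>.trans_eq (mul_one _)

lemma exists_lt_re_apply_of_lt_opNorm (f : E →L[ℂ] ℂ) {r : ℝ} (hr : r < ‖f‖) :
    ∃ a : E, ‖a‖ ≤ 1 ∧ r < (f a).re := by
  obtain ⟨x, hx1, hrx⟩ := f.exists_lt_apply_of_lt_opNorm hr
  rcases eq_or_ne (f x) 0 with h0 | h0
  · exact ⟨0, by simp, by simpa [h0] using hrx⟩
  refine ⟨((‖f x‖ : ℂ) / f x) • x, ?_, ?_⟩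
  · rw [norm_smul, norm_div, Complex.norm_real, norm_norm, div_self (norm_ne_zero_iff.mpr h0),
      one_mul]
    exact hx1.le
  · rwa [map_smul, smul_eq_mul, div_mul_cancel₀ _ h0, Complex.ofReal_re]

lemma opNorm_le_of_apply_eq_conj_apply_star [StarAddMonoid E] [NormedStarGroup E]
    {f g : E →L[ℂ] ℂ} (h : ∀ a, g a = starRingEnd ℂ (f (star a))) : ‖g‖ ≤ ‖f‖ :=
  g.opNorm_le_bound (norm_nonneg f) fun a => by
    rw [h, Complex.norm_conj, ← norm_star a]
    exact f.le_opNorm _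

end ContinuousLinearMap

lemma CStarRing.norm_one_le_one {E : Type*} [NormedRing E] [StarRing E] [CStarRing E] :
    ‖(1 : E)‖ ≤ 1 := by
  rcases subsingleton_or_nontrivial E with _ | _
  · simp [Subsingleton.elim (1 : E) 0]
  · exact CStarRing.norm_one.le

namespace PositiveLinearMap

variable {B : Type*} [CStarAlgebra B] [PartialOrder B] [StarOrderedRing B] (f : B →ₚ[ℂ] ℂ)

lemma norm_toPreGNS_sq_le (b : B) : ‖f.toPreGNS b‖ ^ 2 ≤ ‖f 1‖ * ‖b‖ ^ 2 := by
  have h := congrArg norm (f.preGNS_norm_sq (f.toPreGNS b))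
  rw [← Complex.ofReal_pow, Complex.norm_real, Real.norm_of_nonneg (by positivity)] at h
  rw [h, sq, ← CStarRing.norm_star_mul_self]
  exact f.norm_apply_le_of_nonneg _ (star_mul_self_nonneg b)

lemma norm_apply_sub_apply_mul_sq_le {K : ℝ} (hK : ‖f 1‖ ≤ K) (b : B) {c : B} (hc : ‖c‖ ≤ 1) :
    ‖f b - f (b * c)‖ ^ 2 ≤ 2 * K * (K - (f c).re) * ‖b‖ ^ 2 := by
  have hinner : f b - f (b * c) = ⟪f.toPreGNS (star b), f.toPreGNS (1 - c)⟫_ℂ := by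
    rw [preGNS_inner_def, ofPreGNS_toPreGNS, ofPreGNS_toPreGNS, star_star, mul_sub, mul_one,
      map_sub]
  have hb : ‖f.toPreGNS (star b)‖ ^ 2 ≤ K * ‖b‖ ^ 2 := by
    have := f.norm_toPreGNS_sq_le (star b)
    rw [norm_star] at this
    exact this.trans (by gcongr)
  have hc' : ‖f.toPreGNS (1 - c)‖ ^ 2 ≤ 2 * (K - (f c).re) := by
    have h1 := f.norm_toPreGNS_sq_le 1
    have h2 := f.norm_toPreGNS_sq_le c
    have hre : ⟪f.toPreGNS 1, f.toPreGNS c⟫_ℂ = f c := by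
      rw [preGNS_inner_def, ofPreGNS_toPreGNS, ofPreGNS_toPreGNS, star_one, one_mul]
    have hK' {d : B} (hd : ‖d‖ ≤ 1) : ‖f 1‖ * ‖d‖ ^ 2 ≤ K :=
      (mul_le_of_le_one_right (norm_nonneg _) (pow_le_one₀ (norm_nonneg d) hd)).trans hK
    rw [map_sub, norm_sub_sq (𝕜 := ℂ), hre, RCLike.re_to_complex]
    linarith [hK' CStarRing.norm_one_le_one, hK' hc]
  calc ‖f b - f (b * c)‖ ^ 2
      ≤ (‖f.toPreGNS (star b)‖ * ‖f.toPreGNS (1 - c)‖) ^ 2 := by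
        rw [hinner]; gcongr; exact norm_inner_le_norm _ _
    _ = ‖f.toPreGNS (star b)‖ ^ 2 * ‖f.toPreGNS (1 - c)‖ ^ 2 := mul_pow _ _ _
    _ ≤ K * ‖b‖ ^ 2 * (2 * (K - (f c).re)) :=
        mul_le_mul hb hc' (sq_nonneg _) ((sq_nonneg _).trans hb)
    _ = 2 * K * (K - (f c).re) * ‖b‖ ^ 2 := by ring

end PositiveLinearMap

namespace PolarWitness

variable {A : Type u} [NonUnitalCStarAlgebra A] {ψ absψ : A →L[ℂ] ℂ}

noncomputable instance (w : PolarWitness A ψ absψ) : CStarAlgebra w.B :=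
  { w.instRing, w.instStarRing, w.instCStar, w.instAlg, w.instStarMod, w.instComplete with }

attribute [local instance] CStarAlgebra.spectralOrder CStarAlgebra.spectralOrderedRing

noncomputable def absΦPos (w : PolarWitness A ψ absψ) : w.B →ₚ[ℂ] ℂ :=
  .mk₀ w.absΦ.toLinearMap fun _ hb => by
    obtain ⟨c, rfl⟩ := CStarAlgebra.nonneg_iff_eq_star_mul_self.mp hb
    exact w.habsΦpos c

lemma norm_abs_sub_apply_mul_sq_le (w : PolarWitness A ψ absψ) {a : A} (ha : ‖a‖ ≤ 1) (x : A) :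
    ‖absψ x - ψ (x * a)‖ ^ 2 ≤ 2 * ‖ψ‖ * (‖ψ‖ - (ψ a).re) * ‖x‖ ^ 2 := by
  have hf (b : w.B) : w.absΦPos b = w.absΦ b := rfl
  have hsub : absψ x - ψ (x * a) = w.absΦPos (w.ι x) - w.absΦPos (w.ι x * (w.ι a * w.u)) := by
    rw [hf, hf, w.habsψ, ← w.hΦ, w.ι_mul, w.hpolar, mul_assoc]
  have hc : w.absΦPos (w.ι a * w.u) = ψ a := by rw [hf, ← w.hpolar, w.hΦ]
  have hone : ‖w.absΦPos 1‖ ≤ ‖ψ‖ := by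
    rw [hf, ← w.habsΦnorm]
    exact w.absΦ.le_of_opNorm_le_of_le le_rfl CStarRing.norm_one_le_one |>.trans_eq (mul_one _)
  have hnorm : ‖w.ι a * w.u‖ ≤ 1 :=
    (norm_mul_le _ _).trans (mul_le_one₀ (w.ι_isometry a ▸ ha) (norm_nonneg _) w.hu1)
  rw [hsub, ← hc, ← w.ι_isometry x]
  exact w.absΦPos.norm_apply_sub_apply_mul_sq_le hone _ hnorm

end PolarWitness

lemma IsAbsValue.norm_sub_apply_mul_sq_le {A : Type u} [NonUnitalCStarAlgebra A]
    {ψ absψ : A →L[ℂ] ℂ} (h : IsAbsValue ψ absψ) {a : A} (ha : ‖a‖ ≤ 1) {C ε : ℝ}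
    (hC : ‖ψ‖ ≤ C) (hε : ‖ψ‖ ≤ (ψ a).re + ε) (x : A) :
    ‖absψ x - ψ (x * a)‖ ^ 2 ≤ 2 * C * ε * ‖x‖ ^ 2 := by
  obtain ⟨w⟩ := h
  refine (w.norm_abs_sub_apply_mul_sq_le ha x).trans (mul_le_mul_of_nonneg_right ?_ (sq_nonneg _))
  have hre := ψ.re_apply_le_opNorm ha
  nlinarith [norm_nonneg ψ]

lemma tendsto_of_forall_exists_dist_le {ι E : Type*} [PseudoMetricSpace E] {l : Filter ι}
    {f : ι → E} {y : E}
    (h : ∀ δ > 0, ∃ g : ι → E, ∃ z, Tendsto g l (𝓝 z) ∧ (∀ i, dist (f i) (g i) ≤ δ) ∧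
      dist z y ≤ δ) :
    Tendsto f l (𝓝 y) := by
  refine Metric.tendsto_nhds.mpr fun ε hε => ?_
  obtain ⟨g, z, hg, hfg, hzy⟩ := h (ε / 3) (by positivity)
  filter_upwards [Metric.tendsto_nhds.mp hg (ε / 3) (by positivity)] with i hi
  calc dist (f i) y ≤ dist (f i) (g i) + dist (g i) z + dist z y := dist_triangle4 _ _ _ _
    _ < ε := by linarith [hfg i]

section Ultraproduct

variable {A : ℕ → Type u} [∀ i, NonUnitalCStarAlgebra (A i)] {l : Filter ℕ}

lemma opNorm_le_of_tendsto_of_norm_le [l.NeBot] {B : Type*} [NormedAddCommGroup B]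
    [NormedSpace ℂ B] {q : (∀ i, A i) → B}
    (q_norm : ∀ x, BddFamily x → Tendsto (fun i => ‖x i‖) l (𝓝 ‖q x‖))
    (q_surj : ∀ b : B, ∃ x, BddFamily x ∧ q x = b) {ψ : B →L[ℂ] ℂ} {ψi : ∀ i, A i →L[ℂ] ℂ}
    (hrep : ∀ x, BddFamily x → Tendsto (fun i => ψi i (x i)) l (𝓝 (ψ (q x))))
    {r : ℕ → ℝ} {R : ℝ} (hr : ∀ i, ‖ψi i‖ ≤ r i) (hR : Tendsto r l (𝓝 R)) : ‖ψ‖ ≤ R := by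
  refine ψ.opNorm_le_bound (ge_of_tendsto' hR fun i => (norm_nonneg _).trans (hr i)) fun b => ?_
  obtain ⟨y, hy, rfl⟩ := q_surj b
  exact le_of_tendsto_of_tendsto' (hrep y hy).norm (hR.mul (q_norm y hy)) fun i =>
    ((ψi i).le_opNorm _).trans (mul_le_mul_of_nonneg_right (hr i) (norm_nonneg _))

lemma tendsto_conj_apply_star_of_tendsto_apply {B : Type*} [NonUnitalCStarAlgebra B]
    {q : (∀ i, A i) → B}
    (q_star : ∀ x, BddFamily x → q (fun i => star (x i)) = star (q x))
    {ψ ψstar : B →L[ℂ] ℂ} {ψi ψstari : ∀ i, A i →L[ℂ] ℂ}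
    (hrep : ∀ x, BddFamily x → Tendsto (fun i => ψi i (x i)) l (𝓝 (ψ (q x))))
    (hψstar : ∀ b : B, ψstar b = starRingEnd ℂ (ψ (star b)))
    (hψstari : ∀ i (a : A i), ψstari i a = starRingEnd ℂ (ψi i (star a)))
    {x : ∀ i, A i} (hx : BddFamily x) :
    Tendsto (fun i => ψstari i (x i)) l (𝓝 (ψstar (q x))) := by
  obtain ⟨C, hC⟩ := hx
  have hstar : BddFamily fun i => star (x i) := ⟨C, fun i => (norm_star (x i)).trans_le (hC i)⟩
  simp only [hψstari, hψstar, ← q_star x ⟨C, hC⟩]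
  exact (Complex.continuous_conj.tendsto _).comp (hrep _ hstar)

lemma tendsto_absValue_apply [l.NeBot] {B : Type*} [NonUnitalCStarAlgebra B]
    {q : (∀ i, A i) → B}
    (q_mul : ∀ x y, BddFamily x → BddFamily y → q (fun i => x i * y i) = q x * q y)
    (q_norm : ∀ x, BddFamily x → Tendsto (fun i => ‖x i‖) l (𝓝 ‖q x‖))
    (q_surj : ∀ b : B, ∃ x, BddFamily x ∧ q x = b)
    {ψ absψ : B →L[ℂ] ℂ} {ψi absψi : ∀ i, A i →L[ℂ] ℂ}
    (hψibdd : ∃ C : ℝ, ∀ i, ‖ψi i‖ ≤ C)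
    (hrep : ∀ x, BddFamily x → Tendsto (fun i => ψi i (x i)) l (𝓝 (ψ (q x))))
    (habsψ : IsAbsValue ψ absψ) (habsψi : ∀ i, IsAbsValue (ψi i) (absψi i))
    {x : ∀ i, A i} (hx : BddFamily x) :
    Tendsto (fun i => absψi i (x i)) l (𝓝 (absψ (q x))) := by
  obtain ⟨C, hC⟩ := hψibdd
  obtain ⟨Cx, hCx⟩ := id hx
  have hqx : ‖q x‖ ≤ Cx := le_of_tendsto' (q_norm x hx) hCx
  have hψC : ‖ψ‖ ≤ C := opNorm_le_of_tendsto_of_norm_le q_norm q_surj hrep hC tendsto_const_nhds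
  refine tendsto_of_forall_exists_dist_le fun δ hδ => ?_
  obtain ⟨ε, hε, hεδ⟩ := exists_pos_mul_lt (pow_pos hδ 2) (2 * C * Cx ^ 2)
  have hle_δ {v y : ℝ} (hy0 : 0 ≤ y) (hy : y ≤ Cx) (hv : v ^ 2 ≤ 2 * C * ε * y ^ 2) : v ≤ δ := by
    refine le_of_pow_le_pow_left₀ two_ne_zero hδ.le (hv.trans ?_)
    have hC0 : 0 ≤ C := (norm_nonneg _).trans (hC 0)
    calc 2 * C * ε * y ^ 2 ≤ 2 * C * ε * Cx ^ 2 := by gcongr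
      _ ≤ δ ^ 2 := by linarith
  choose a ha hψa using fun i => (ψi i).exists_lt_re_apply_of_lt_opNorm (sub_lt_self ‖ψi i‖ hε)
  have hab : BddFamily a := ⟨1, ha⟩
  have hqa : ‖q a‖ ≤ 1 := le_of_tendsto' (q_norm a hab) ha
  have hψqa : ‖ψ‖ ≤ (ψ (q a)).re + ε :=
    opNorm_le_of_tendsto_of_norm_le q_norm q_surj hrep (r := fun i => (ψi i (a i)).re + ε)
      (fun i => (sub_lt_iff_lt_add.mp (hψa i)).le)
      (((Complex.continuous_re.tendsto _).comp (hrep a hab)).add_const ε)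
  have hxa : BddFamily fun i => x i * a i :=
    ⟨Cx, fun i => (norm_mul_le _ _).trans <|
      (mul_le_of_le_one_right (norm_nonneg _) (ha i)).trans (hCx i)⟩
  refine ⟨fun i => ψi i (x i * a i), ψ (q x * q a), q_mul x a hx hab ▸ hrep _ hxa,
    fun i => ?_, ?_⟩
  · rw [dist_eq_norm]
    exact hle_δ (norm_nonneg _) (hCx i)
      ((habsψi i).norm_sub_apply_mul_sq_le (ha i) (hC i) (by linarith [hψa i]) (x i))
  · rw [dist_comm, dist_eq_norm]
    exact hle_δ (norm_nonneg _) hqx (habsψ.norm_sub_apply_mul_sq_le hqa hψC hψqa (q x))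

end Ultraproduct

theorem absValue_commutes_with_ultraproduct_general
    {A : ℕ → Type u} [∀ i, NonUnitalCStarAlgebra (A i)]
    {B : Type} [NonUnitalCStarAlgebra B]
    (U : Ultrafilter ℕ)
    (q : (∀ i, A i) → B)
    (q_mul : ∀ x y, BddFamily x → BddFamily y → q (fun i => x i * y i) = q x * q y)
    (q_star : ∀ x, BddFamily x → q (fun i => star (x i)) = star (q x))
    (q_norm : ∀ x, BddFamily x → Tendsto (fun i => ‖x i‖) ↑U (nhds ‖q x‖))
    (q_surj : ∀ b : B, ∃ x, BddFamily x ∧ q x = b)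
    (ψ ψstar absψ absψstar : B →L[ℂ] ℂ)
    (ψi ψstari absψi absψstari : ∀ i, A i →L[ℂ] ℂ)
    (hψibdd : ∃ C : ℝ, ∀ i, ‖ψi i‖ ≤ C)
    (hrep : ∀ x, BddFamily x → Tendsto (fun i => ψi i (x i)) ↑U (nhds (ψ (q x))))
    (hψstar : ∀ b : B, ψstar b = starRingEnd ℂ (ψ (star b)))
    (hψstari : ∀ i (a : A i), ψstari i a = starRingEnd ℂ (ψi i (star a)))
    (habsψ : IsAbsValue ψ absψ) (habsψstar : IsAbsValue ψstar absψstar)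
    (habsψi : ∀ i, IsAbsValue (ψi i) (absψi i))
    (habsψstari : ∀ i, IsAbsValue (ψstari i) (absψstari i)) :
    (∀ x, BddFamily x →
        Tendsto (fun i => absψi i (x i)) ↑U (nhds (absψ (q x)))) ∧
      (∀ x, BddFamily x →
        Tendsto (fun i => absψstari i (x i)) ↑U (nhds (absψstar (q x)))) := by
  refine ⟨fun x hx => tendsto_absValue_apply q_mul q_norm q_surj hψibdd hrep habsψ habsψi hx,
    fun x hx => ?_⟩
  obtain ⟨C, hC⟩ := hψibdd
  have hψstaribdd : ∃ C : ℝ, ∀ i, ‖ψstari i‖ ≤ C :=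
    ⟨C, fun i => (ContinuousLinearMap.opNorm_le_of_apply_eq_conj_apply_star (hψstari i)).trans
      (hC i)⟩
  exact tendsto_absValue_apply q_mul q_norm q_surj hψstaribdd
    (fun _ => tendsto_conj_apply_star_of_tendsto_apply q_star hrep hψstar hψstari) habsψstar
    habsψstari hx

/-- The absolute value of functionals commutes with Banach-space ultraproducts of
C*-algebras.  Here `B` is the ultraproduct `(A_i)/U` along the free ultrafilter
`U`, presented by the quotient map `q` defined on bounded families, with
ultraproduct norm `‖q x‖ = lim_U ‖x i‖`.  If `ψ = [ψ_i]_U`, then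
`|ψ| = [|ψ_i|]_U` and `|ψ*| = [|ψ_i*|]_U`. -/
theorem absValue_commutes_with_ultraproduct
    {A : ℕ → Type u} [∀ i, NonUnitalCStarAlgebra (A i)]
    {B : Type} [NonUnitalCStarAlgebra B]
    (U : Ultrafilter ℕ) (hU : (U : Filter ℕ) ≤ Filter.cofinite)
    (q : (∀ i, A i) → B)
    (q_add : ∀ x y, BddFamily x → BddFamily y → q (fun i => x i + y i) = q x + q y)
    (q_smul : ∀ (c : ℂ) x, BddFamily x → q (fun i => c • x i) = c • q x)
    (q_mul : ∀ x y, BddFamily x → BddFamily y → q (fun i => x i * y i) = q x * q y)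
    (q_star : ∀ x, BddFamily x → q (fun i => star (x i)) = star (q x))
    (q_norm : ∀ x, BddFamily x → Tendsto (fun i => ‖x i‖) ↑U (nhds ‖q x‖))
    (q_surj : ∀ b : B, ∃ x, BddFamily x ∧ q x = b)
    (ψ ψstar absψ absψstar : B →L[ℂ] ℂ)
    (ψi ψstari absψi absψstari : ∀ i, A i →L[ℂ] ℂ)
    (hψibdd : ∃ C : ℝ, ∀ i, ‖ψi i‖ ≤ C)
    (hrep : ∀ x, BddFamily x → Tendsto (fun i => ψi i (x i)) ↑U (nhds (ψ (q x))))
    (hψstar : ∀ b : B, ψstar b = starRingEnd ℂ (ψ (star b)))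
    (hψstari : ∀ i (a : A i), ψstari i a = starRingEnd ℂ (ψi i (star a)))
    (habsψ : IsAbsValue ψ absψ) (habsψstar : IsAbsValue ψstar absψstar)
    (habsψi : ∀ i, IsAbsValue (ψi i) (absψi i))
    (habsψstari : ∀ i, IsAbsValue (ψstari i) (absψstari i)) :
    (∀ x, BddFamily x →
        Tendsto (fun i => absψi i (x i)) ↑U (nhds (absψ (q x)))) ∧
      (∀ x, BddFamily x →
        Tendsto (fun i => absψstari i (x i)) ↑U (nhds (absψstar (q x)))) :=
  absValue_commutes_with_ultraproduct_general U q q_mul q_star q_norm q_surj ψ ψstar absψ absψstar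
    ψi ψstari absψi absψstari hψibdd hrep hψstar hψstari habsψ habsψstar habsψi habsψstari
end
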